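/- arXiv:1808.10216 — 2 statements merged into one kernel-verified Lean document; each statement's English description precedes it below -/
import Mathlib

section
/- A (J²=±1)-metric manifold is of Kähler type (∇ᵍJ = 0) if and only if the torsion T⁰ of its first canonical connection vanishes identically. -/
/- Abstract algebraic model of a `(J² = ±1)`-metric manifold:
`V` plays the role of the module of (smooth) vector fields (an `ℝ`-vector space),
`F` plays the role of the ring of smooth functions (an `ℝ`-algebra),
`g : V →ₗ[ℝ] V →ₗ[ℝ] F` the metric, `J : V →ₗ[ℝ] V` the almost (para)complex/product
structure, `nabla : V → V →ₗ[ℝ] V` the Levi-Civita connection, `Xact X : F →ₗ[ℝ] F`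
the action of the vector field `X` on functions (`Xact X f = X f`), and
`bracket` the Lie bracket of vector fields. -/

variable {V : Type*} [AddCommGroup V] [Module ℝ V]

/-- The covariant derivative `(∇_X J) Y = ∇_X (J Y) - J (∇_X Y)`. -/
def nablaJ (nabla : V → V →ₗ[ℝ] V) (J : V →ₗ[ℝ] V) (X Y : V) : V :=
  nabla X (J Y) - J (nabla X Y)

/-- The first canonical connection `∇⁰_X Y = ∇_X Y + (-α/2) • (∇_X J)(J Y)`. -/
noncomputable def canon (α : ℝ) (nabla : V → V →ₗ[ℝ] V) (J : V →ₗ[ℝ] V) (X Y : V) : V :=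
  nabla X Y - (α / 2) • nablaJ nabla J X (J Y)

/-- The torsion `T⁰(X,Y) = ∇⁰_X Y - ∇⁰_Y X - [X,Y]` of the first canonical connection. -/
noncomputable def torsion0 (α : ℝ) (nabla : V → V →ₗ[ℝ] V) (J : V →ₗ[ℝ] V)
    (bracket : V → V → V) (X Y : V) : V :=
  canon α nabla J X Y - canon α nabla J Y X - bracket X Y

/-- The Nijenhuis tensor of `J`, expressed through the Levi-Civita connection:
`N_J(X,Y) = (∇_X J)(JY) + (∇_{JX} J)Y - (∇_Y J)(JX) - (∇_{JY} J)X`. -/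
def nijenhuis (nabla : V → V →ₗ[ℝ] V) (J : V →ₗ[ℝ] V) (X Y : V) : V :=
  nablaJ nabla J X (J Y) + nablaJ nabla J (J X) Y
    - nablaJ nabla J Y (J X) - nablaJ nabla J (J Y) X

/-! Since `∇` is torsion-free, `T⁰(X,Y) = (α/2)((∇_Y J)(JX) - (∇_X J)(JY))`, and as
`(∇_X J)J = -J(∇_X J)` with `J` injective, `T⁰ = 0` says exactly that `(∇_X J)Y` is symmetric in
`X, Y`. Differentiating `g(J·,J·) = ε g` gives `φ(X,Y,Z) = αε φ(X,Z,Y)` for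
`φ(X,Y,Z) = g((∇_X J)Y, Z)`. If `αε = -1`, a form symmetric in its first two slots and
antisymmetric in its last two vanishes. If `αε = 1`, `φ` is totally symmetric while moving `J` from
one slot to another changes its sign; moving it once around all three slots gives
`φ(JX,Y,Z) = -φ(JX,Y,Z)`. -/

section

variable {E M : Type*} [AddGroup M] [IsAddTorsionFree M] (φ : E → E → E → M)

theorem eq_zero_of_symm_of_antisymm (h12 : ∀ x y z, φ x y z = φ y x z)
    (h23 : ∀ x y z, φ x y z = -φ x z y) (x y z : E) : φ x y z = 0 := by
  refine self_eq_neg.mp ?_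
  calc φ x y z = -φ x z y := h23 x y z
    _ = -φ z x y := by rw [h12]
    _ = φ z y x := by rw [h23, neg_neg]
    _ = φ y z x := by rw [h12]
    _ = -φ y x z := h23 y z x
    _ = -φ x y z := by rw [h12]

theorem apply_left_eq_zero_of_symm_of_swap_neg (J : E → E) (h12 : ∀ x y z, φ x y z = φ y x z)
    (h23 : ∀ x y z, φ x y z = φ x z y) (hJ : ∀ x y z, φ x (J y) z = -φ x y (J z))
    (x y z : E) : φ (J x) y z = 0 := by
  have h13 : ∀ x y z, φ x y z = φ z y x := fun x y z => by rw [h12, h23, h12]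
  have h1 : φ (J x) y z = -φ x y (J z) := by rw [h12, hJ, h12]
  have h2 : φ (J x) y z = -φ x (J y) z := by rw [h13, ← neg_neg (φ z y (J x)), ← hJ, h13]
  refine self_eq_neg.mp ?_
  calc φ (J x) y z = -φ x (J y) z := h2
    _ = φ x y (J z) := by rw [hJ, neg_neg]
    _ = -φ (J x) y z := by rw [h1, neg_neg]

end

section KaehlerType

variable {F : Type*} [AddCommGroup F] [Module ℝ F] {α ε : ℝ} {J : V →ₗ[ℝ] V}
  {g : V →ₗ[ℝ] V →ₗ[ℝ] F} {nabla : V → V →ₗ[ℝ] V} {Xact : V → F →ₗ[ℝ] F}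
  {bracket : V → V → V}

theorem injective_of_apply_apply_eq_smul (hα : α ≠ 0) (hJ2 : ∀ x, J (J x) = α • x) :
    Function.Injective J := fun x y h => by
  simpa [hJ2, hα] using congrArg J h

theorem nablaJ_apply_J (hJ2 : ∀ x, J (J x) = α • x) (X Y : V) :
    nablaJ nabla J X (J Y) = -J (nablaJ nabla J X Y) := by
  simp only [nablaJ, hJ2, map_smul, map_sub, neg_sub]

theorem torsion0_eq (htf : ∀ X Y : V, nabla X Y - nabla Y X = bracket X Y) (X Y : V) :
    torsion0 α nabla J bracket X Y
      = (α / 2) • (nablaJ nabla J Y (J X) - nablaJ nabla J X (J Y)) := by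
  simp only [torsion0, canon, ← htf, smul_sub]
  abel

theorem nablaJ_comm_of_torsion0_eq_zero (hα : α ≠ 0) (hJ2 : ∀ x, J (J x) = α • x)
    (htf : ∀ X Y : V, nabla X Y - nabla Y X = bracket X Y)
    (htor : ∀ X Y : V, torsion0 α nabla J bracket X Y = 0) (X Y : V) :
    nablaJ nabla J X Y = nablaJ nabla J Y X := by
  have h := htor X Y
  rw [torsion0_eq htf, smul_eq_zero_iff_right (div_ne_zero hα two_ne_zero), sub_eq_zero,
    nablaJ_apply_J hJ2, nablaJ_apply_J hJ2, neg_inj] at h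
  exact injective_of_apply_apply_eq_smul hα hJ2 h.symm

theorem metric_J_left (hα : α * α = 1) (hJ2 : ∀ x, J (J x) = α • x)
    (hJg : ∀ x y, g (J x) (J y) = ε • g x y) (u v : V) :
    g (J u) v = (α * ε) • g u (J v) := by
  have h := congrArg (α • ·) (hJg u (J v))
  simpa only [hJ2, map_smul, smul_smul, hα, one_smul] using h

theorem metric_nablaJ_J_add_metric_J_nablaJ (hJg : ∀ x y, g (J x) (J y) = ε • g x y)
    (hcompat : ∀ X Y Z : V, Xact X (g Y Z) = g (nabla X Y) Z + g Y (nabla X Z)) (X Y Z : V) :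
    g (nablaJ nabla J X Y) (J Z) + g (J Y) (nablaJ nabla J X Z) = 0 := by
  have h := hcompat X (J Y) (J Z)
  rw [hJg, map_smul, hcompat, smul_add, ← hJg, ← hJg] at h
  simp only [nablaJ, map_sub, LinearMap.sub_apply]
  rw [sub_add_sub_comm, sub_eq_zero, h]

theorem metric_nablaJ_comm (hα : α * α = 1) (hJ2 : ∀ x, J (J x) = α • x)
    (hgsymm : ∀ x y, g x y = g y x) (hJg : ∀ x y, g (J x) (J y) = ε • g x y)
    (hcompat : ∀ X Y Z : V, Xact X (g Y Z) = g (nabla X Y) Z + g Y (nabla X Z)) (X Y Z : V) :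
    g (nablaJ nabla J X Y) Z = (α * ε) • g (nablaJ nabla J X Z) Y := by
  have h := metric_nablaJ_J_add_metric_J_nablaJ hJg hcompat X Y (J Z)
  rw [hJ2, map_smul, nablaJ_apply_J hJ2, map_neg, hJg, hgsymm Y, add_neg_eq_zero] at h
  rw [mul_smul, ← h, smul_smul, hα, one_smul]

theorem nablaJ_eq_zero_of_comm (hα : α * α = 1) (hε : ε * ε = 1)
    (hJ2 : ∀ x, J (J x) = α • x) (hgsymm : ∀ x y, g x y = g y x)
    (hgnd : ∀ x : V, (∀ y : V, g x y = 0) → x = 0) (hJg : ∀ x y, g (J x) (J y) = ε • g x y)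
    (hcompat : ∀ X Y Z : V, Xact X (g Y Z) = g (nabla X Y) Z + g Y (nabla X Z))
    (hcomm : ∀ X Y : V, nablaJ nabla J X Y = nablaJ nabla J Y X) (X Y : V) :
    nablaJ nabla J X Y = 0 := by
  have := IsAddTorsionFree.of_isTorsionFree ℝ F
  set φ : V → V → V → F := fun X Y Z => g (nablaJ nabla J X Y) Z
  have h12 : ∀ X Y Z, φ X Y Z = φ Y X Z := fun X Y Z => by simp only [φ, hcomm X Y]
  have h23 : ∀ X Y Z, φ X Y Z = (α * ε) • φ X Z Y := metric_nablaJ_comm hα hJ2 hgsymm hJg hcompat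
  refine hgnd _ fun Z => ?_
  obtain hβ | hβ := mul_self_eq_one_iff.mp (show (α * ε) * (α * ε) = 1 by
    rw [mul_mul_mul_comm, hα, hε, one_mul])
  · have hJ : ∀ X Y Z, φ X (J Y) Z = -φ X Y (J Z) := fun X Y Z => by
      simp only [φ, nablaJ_apply_J hJ2, map_neg, LinearMap.neg_apply, metric_J_left hα hJ2 hJg,
        hβ, one_smul]
    have hX : J (α • J X) = X := by rw [map_smul, hJ2, smul_smul, hα, one_smul]
    rw [← hX]
    exact apply_left_eq_zero_of_symm_of_swap_neg φ J h12 (by simpa [hβ] using h23) hJ _ Y Z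
  · exact eq_zero_of_symm_of_antisymm φ h12 (by simpa [hβ] using h23) X Y Z

end KaehlerType

/-- A `(J²=±1)`-metric manifold is of Kähler type iff the torsion of its first
canonical connection vanishes identically. -/
theorem stmt8 {F : Type*} [CommRing F] [Algebra ℝ F]
    (α ε : ℝ) (hα : α = 1 ∨ α = -1) (hε : ε = 1 ∨ ε = -1)
    (J : V →ₗ[ℝ] V) (hJ2 : ∀ x, J (J x) = α • x)
    (g : V →ₗ[ℝ] V →ₗ[ℝ] F) (hgsymm : ∀ x y, g x y = g y x)
    (hgnd : ∀ x : V, (∀ y : V, g x y = 0) → x = 0)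
    (hJg : ∀ x y, g (J x) (J y) = ε • g x y)
    (nabla : V → V →ₗ[ℝ] V) (Xact : V → F →ₗ[ℝ] F)
    (hcompat : ∀ X Y Z : V, Xact X (g Y Z) = g (nabla X Y) Z + g Y (nabla X Z))
    (bracket : V → V → V)
    (htf : ∀ X Y : V, nabla X Y - nabla Y X = bracket X Y) :
    (∀ X Y : V, nablaJ nabla J X Y = 0) ↔
      (∀ X Y : V, torsion0 α nabla J bracket X Y = 0) := by
  have hα2 : α * α = 1 := mul_self_eq_one_iff.mpr hα
  have hε2 : ε * ε = 1 := mul_self_eq_one_iff.mpr hε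
  constructor
  · intro hK X Y
    simp only [torsion0_eq htf, hK, sub_zero, smul_zero]
  · intro htor
    exact nablaJ_eq_zero_of_comm hα2 hε2 hJ2 hgsymm hgnd hJg hcompat
      (nablaJ_comm_of_torsion0_eq_zero (left_ne_zero_of_mul_eq_one hα2) hJ2 htf htor)
end

section
/- J is integrable (N_J = 0) on a (J²=±1)-metric manifold if and only if T⁰(JX,JY) + α T⁰(X,Y) = 0 for all vector fields X,Y, where T⁰ is the torsion of the first canonical connection. -/
/- Abstract algebraic model of a `(J² = ±1)`-metric manifold:
`V` plays the role of the module of (smooth) vector fields (an `ℝ`-vector space),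
`F` plays the role of the ring of smooth functions (an `ℝ`-algebra),
`g : V →ₗ[ℝ] V →ₗ[ℝ] F` the metric, `J : V →ₗ[ℝ] V` the almost (para)complex/product
structure, `nabla : V → V →ₗ[ℝ] V` the Levi-Civita connection, `Xact X : F →ₗ[ℝ] F`
the action of the vector field `X` on functions (`Xact X f = X f`), and
`bracket` the Lie bracket of vector fields. -/

variable {V : Type*} [AddCommGroup V] [Module ℝ V]

lemma nablaJ_smul (nabla : V → V →ₗ[ℝ] V) (J : V →ₗ[ℝ] V) (c : ℝ) (X Y : V) :
    nablaJ nabla J X (c • Y) = c • nablaJ nabla J X Y := by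
  simp only [nablaJ, map_smul, smul_sub]

lemma torsion0_eq_of_torsionFree (α : ℝ) (nabla : V → V →ₗ[ℝ] V) (J : V →ₗ[ℝ] V)
    (bracket : V → V → V) (htf : ∀ X Y : V, nabla X Y - nabla Y X = bracket X Y) (X Y : V) :
    torsion0 α nabla J bracket X Y
      = -(α / 2) • (nablaJ nabla J X (J Y) - nablaJ nabla J Y (J X)) := by
  simp only [torsion0, canon, ← htf]
  module

lemma torsion0_J_J_add_smul_torsion0 (α : ℝ) (J : V →ₗ[ℝ] V) (hJ2 : ∀ x, J (J x) = α • x)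
    (nabla : V → V →ₗ[ℝ] V) (bracket : V → V → V)
    (htf : ∀ X Y : V, nabla X Y - nabla Y X = bracket X Y) (X Y : V) :
    torsion0 α nabla J bracket (J X) (J Y) + α • torsion0 α nabla J bracket X Y
      = -(α ^ 2 / 2) • nijenhuis nabla J X Y := by
  simp only [torsion0_eq_of_torsionFree α nabla J bracket htf, hJ2, nablaJ_smul, nijenhuis]
  module

/-- `J` is integrable (`N_J = 0`) iff `T⁰(JX,JY) + α T⁰(X,Y) = 0` for all `X, Y`. -/
theorem stmt10 (α : ℝ) (hα : α = 1 ∨ α = -1)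
    (J : V →ₗ[ℝ] V) (hJ2 : ∀ x, J (J x) = α • x)
    (nabla : V → V →ₗ[ℝ] V) (bracket : V → V → V)
    (htf : ∀ X Y : V, nabla X Y - nabla Y X = bracket X Y) :
    (∀ X Y : V, nijenhuis nabla J X Y = 0) ↔
      (∀ X Y : V,
        torsion0 α nabla J bracket (J X) (J Y)
          + α • torsion0 α nabla J bracket X Y = 0) := by
  have hcoeff : -(α ^ 2 / 2) ≠ 0 := by rcases hα with rfl | rfl <;> norm_num
  simp only [torsion0_J_J_add_smul_torsion0 α J hJ2 nabla bracket htf, smul_eq_zero, hcoeff,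
    false_or]
end
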